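/- Let n ≥ 2 and let φ_λ : ℝⁿ × ℝ → ℝⁿ, λ ∈ [0,1], be a coercive family of dissipative flows, K_0 the global attractor of φ_0, and (K_λ)_{λ∈[0,λ₁]} a continuation of K_0 with each K_λ (λ > 0) an attractor of φ_λ. For small λ > 0 set C_λ = ℝⁿ ∖ (A_λ(K_λ) ∪ R_λ), where R_λ = {x : ‖φ_λ(x,t)‖ → ∞ as t → −∞}. Then diam(C_λ) → ∞ as λ → 0⁺; more precisely, for every L > 0 there exists λ₀ > 0 such that diam(C_λ) > L for all 0 < λ < λ₀. -/

import Mathlib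

open Set Metric Filter Topology Bornology

section Defs

variable {M : Type*} [TopologicalSpace M]

/-- A (continuous) flow on a topological space. -/
def IsFlow (φ : M → ℝ → M) : Prop :=
  Continuous (fun p : M × ℝ => φ p.1 p.2) ∧
    (∀ x, φ x 0 = x) ∧ ∀ x s t, φ (φ x s) t = φ x (s + t)

/-- A set `S` is invariant for the flow `φ` if `φ(S,t) = S` for every `t`. -/
def FlowInvariant (φ : M → ℝ → M) (S : Set M) : Prop :=
  ∀ t : ℝ, (fun x => φ x t) '' S = S

/-- The omega-limit set `ω(x) = ⋂_{t>0} cl (φ(x,[t,∞)))`. -/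
def omegaLimitSet (φ : M → ℝ → M) (x : M) : Set M :=
  ⋂ t ∈ Ioi (0 : ℝ), closure (φ x '' Ici t)

/-- The negative omega-limit set `ω*(x) = ⋂_{t<0} cl (φ(x,(-∞,t]))`. -/
def negOmegaLimitSet (φ : M → ℝ → M) (x : M) : Set M :=
  ⋂ t ∈ Iio (0 : ℝ), closure (φ x '' Iic t)

/-- A flow is dissipative if every omega-limit set is nonempty and the closure of the
union of all omega-limit sets is compact. -/
def Dissipative (φ : M → ℝ → M) : Prop :=
  (∀ x, (omegaLimitSet φ x).Nonempty) ∧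
    IsCompact (closure (⋃ x, omegaLimitSet φ x))

/-- `K` is stable: every neighborhood `U` of `K` contains a neighborhood `V` of `K`
with `φ(V,[0,∞)) ⊆ U`. -/
def FlowStable (φ : M → ℝ → M) (K : Set M) : Prop :=
  ∀ U ∈ nhdsSet K, ∃ V ∈ nhdsSet K, ∀ x ∈ V, ∀ t : ℝ, 0 ≤ t → φ x t ∈ U

/-- `K` is negatively stable: every neighborhood `U` of `K` contains a neighborhood `V`
of `K` with `φ(V,(-∞,0]) ⊆ U`. -/
def FlowNegStable (φ : M → ℝ → M) (K : Set M) : Prop :=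
  ∀ U ∈ nhdsSet K, ∃ V ∈ nhdsSet K, ∀ x ∈ V, ∀ t : ℝ, t ≤ 0 → φ x t ∈ U

/-- The region of attraction `A(K) = {x : ∅ ≠ ω(x) ⊆ K}`. -/
def attractionRegion (φ : M → ℝ → M) (K : Set M) : Set M :=
  {x | (omegaLimitSet φ x).Nonempty ∧ omegaLimitSet φ x ⊆ K}

/-- The region of repulsion `R(K) = {x : ∅ ≠ ω*(x) ⊆ K}`. -/
def repulsionRegion (φ : M → ℝ → M) (K : Set M) : Set M :=
  {x | (negOmegaLimitSet φ x).Nonempty ∧ negOmegaLimitSet φ x ⊆ K}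

/-- An attractor: a compact invariant stable set which is attracting, i.e. its region of
attraction is a neighborhood of it. -/
def IsAttractor (φ : M → ℝ → M) (K : Set M) : Prop :=
  IsCompact K ∧ FlowInvariant φ K ∧ FlowStable φ K ∧
    attractionRegion φ K ∈ nhdsSet K

/-- A repeller: a compact invariant negatively stable set which is repelling. -/
def IsRepeller (φ : M → ℝ → M) (K : Set M) : Prop :=
  IsCompact K ∧ FlowInvariant φ K ∧ FlowNegStable φ K ∧
    repulsionRegion φ K ∈ nhdsSet K

/-- A global attractor: a compact invariant stable set whose region of attraction is the
whole space. -/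
def IsGlobalAttractor (φ : M → ℝ → M) (K : Set M) : Prop :=
  IsCompact K ∧ FlowInvariant φ K ∧ FlowStable φ K ∧
    attractionRegion φ K = univ

/-- `N` is an isolating neighborhood of `K`: a compact neighborhood of `K` such that `K`
is the maximal invariant set contained in `N`. -/
def IsIsolatingNbhd (φ : M → ℝ → M) (N K : Set M) : Prop :=
  IsCompact N ∧ K ⊆ interior N ∧ FlowInvariant φ K ∧
    ∀ S : Set M, FlowInvariant φ S → S ⊆ N → S ⊆ K

/-- An isolated invariant set: a compact invariant set having an isolating neighborhood. -/
def IsIsolatedInvariant (φ : M → ℝ → M) (K : Set M) : Prop :=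
  IsCompact K ∧ FlowInvariant φ K ∧ ∃ N, IsIsolatingNbhd φ N K

/-- A parametrized family of flows `(φ_λ)_{λ ∈ [0,1]}`: jointly continuous on
`[0,1] × M × ℝ` and each `φ_λ` is a flow. -/
def IsParamFlow (φ : ℝ → M → ℝ → M) : Prop :=
  ContinuousOn (fun p : ℝ × M × ℝ => φ p.1 p.2.1 p.2.2)
      ((Icc 0 1 : Set ℝ) ×ˢ (univ : Set (M × ℝ))) ∧
    ∀ l ∈ Icc (0 : ℝ) 1, IsFlow (φ l)

/-- `(K_λ)_{λ ∈ J}` is a continuation: each `K_λ` is an isolated invariant set of `φ_λ`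
and every isolating neighborhood of `K_{λ₀}` remains an isolating neighborhood of `K_λ`
for `λ` near `λ₀` in `J`. -/
def IsContinuation (φ : ℝ → M → ℝ → M) (J : Set ℝ) (K : ℝ → Set M) : Prop :=
  (∀ l ∈ J, IsIsolatedInvariant (φ l) (K l)) ∧
    ∀ l₀ ∈ J, ∀ N : Set M, IsIsolatingNbhd (φ l₀) N (K l₀) →
      ∃ δ > 0, ∀ l ∈ J, |l - l₀| < δ → IsIsolatingNbhd (φ l) N (K l)

/-- The family `(φ_λ)` is uniformly dissipative. -/
def UniformlyDissipative (φ : ℝ → M → ℝ → M) : Prop :=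
  (∀ l ∈ Icc (0 : ℝ) 1, ∀ x, (omegaLimitSet (φ l) x).Nonempty) ∧
    IsCompact (closure (⋃ l ∈ Icc (0 : ℝ) 1, ⋃ x, omegaLimitSet (φ l) x))

end Defs

section NormedDefs

variable {E : Type*} [NormedAddCommGroup E]

/-- A coercive family of dissipative flows: for every continuation of the global
attractor of `φ₀`, the regions of attraction are bounded for all small `λ > 0`. -/
def CoerciveFamily (φ : ℝ → E → ℝ → E) : Prop :=
  ∀ lam1 ∈ Ioc (0 : ℝ) 1, ∀ K : ℝ → Set E,
    IsContinuation φ (Icc 0 lam1) K → IsGlobalAttractor (φ 0) (K 0) →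
      ∃ lam0, 0 < lam0 ∧ lam0 ≤ lam1 ∧ ∀ l, 0 < l → l < lam0 →
        IsBounded (attractionRegion (φ l) (K l))

/-- A polar family of dissipative flows: it has arbitrarily large bounded trajectories. -/
def PolarFamily (φ : ℝ → E → ℝ → E) : Prop :=
  ∀ L > 0, ∃ lam0 > 0, ∀ l, 0 < l → l < lam0 → l ≤ 1 →
    ∃ x : E, IsBounded (range (φ l x)) ∧
      ∃ tl < (0 : ℝ), ∀ t < tl, L < ‖φ l x t‖

/-- The set of points whose trajectory tends to infinity in negative time
(the region of repulsion of the point at infinity). -/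
def escapeRegion (φ : ℝ → E → ℝ → E) (l : ℝ) : Set E :=
  {x | Tendsto (fun t => ‖φ l x t‖) atBot atTop}

/-- The complementary isolated invariant set
`C_λ = ℝⁿ ∖ (A_λ(K_λ) ∪ R_λ(∞))`. -/
def complementarySet (φ : ℝ → E → ℝ → E) (K : ℝ → Set E) (l : ℝ) : Set E :=
  (attractionRegion (φ l) (K l) ∪ escapeRegion φ l)ᶜ

end NormedDefs

/-!
Since `K₀` is a stable global attractor of `φ₀`, a large closed ball `N` around the origin
is an isolating neighbourhood of `K₀`, and `φ₀` carries all of `N` into its interior after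
some time `T`, uniformly. Mapping the compact set `N × [T, 2T]` into the open set
`interior N` is an open condition, so it persists for `φ_λ` with `λ` small; iterating it
traps every `φ_λ`-orbit starting in `N`, so `N ⊆ A_λ(K_λ)`. The basin `A_λ(K_λ)` is open,
invariant and, by coercivity, bounded; hence its frontier meets neither the basin nor the
escape region, i.e. lies in `C_λ`. Two opposite rays from the origin cross this frontier
outside `N`, at distance at least twice the radius of `N` from each other.
-/

section Trajectories

variable {X : Type*} {ψ : X → ℝ → X} {S : Set X}

lemma FlowInvariant.mapsTo (h : FlowInvariant ψ S) (t : ℝ) : MapsTo (fun y => ψ y t) S S :=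
  fun _ hy => h t ▸ mem_image_of_mem _ hy

lemma forall_ge_mem_of_forall_mem_Icc (ha : ∀ x s t, ψ (ψ x s) t = ψ x (s + t)) {Y O : Set X}
    (hOY : O ⊆ Y) {T : ℝ} (hT : 0 < T) (h : ∀ x ∈ Y, ∀ t ∈ Icc T (2 * T), ψ x t ∈ O) :
    ∀ x ∈ Y, ∀ t, T ≤ t → ψ x t ∈ O := by
  have hk : ∀ k : ℕ, ∀ x ∈ Y, ∀ t ∈ Icc (T + k * T) (2 * T + k * T), ψ x t ∈ O := by
    intro k
    induction k with
    | zero => simpa using h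
    | succ k ih =>
      intro x hx t ⟨ht₁, ht₂⟩
      push_cast at ht₁ ht₂
      have hxt := ih x hx (t - T) ⟨by linarith, by linarith⟩
      simpa [ha] using h _ (hOY hxt) T ⟨le_rfl, by linarith⟩
  intro x hx t ht
  have h₁ : ⌊(t - T) / T⌋₊ * T ≤ t - T :=
    (le_div_iff₀ hT).1 (Nat.floor_le (div_nonneg (by linarith) hT.le))
  have h₂ : t - T < (⌊(t - T) / T⌋₊ + 1) * T := (div_lt_iff₀ hT).1 (Nat.lt_floor_add_one _)
  exact hk _ x hx t ⟨by linarith, by linarith⟩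

end Trajectories

section Flow

variable {X : Type*} [TopologicalSpace X] {ψ : X → ℝ → X} {x : X} {C K N S U : Set X}

def IsFlow.toFlow (hψ : IsFlow ψ) : Flow ℝ X where
  toFun t y := ψ y t
  cont' := hψ.1.comp continuous_swap
  map_add' t₁ t₂ y := by rw [hψ.2.2, add_comm]
  map_zero' := hψ.2.1

lemma IsFlow.continuous_apply (hψ : IsFlow ψ) (t : ℝ) : Continuous fun y => ψ y t :=
  hψ.toFlow.continuous continuous_const continuous_id

lemma flowInvariant_iff_isInvariant (hψ : IsFlow ψ) :
    FlowInvariant ψ S ↔ IsInvariant hψ.toFlow S :=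
  (hψ.toFlow.isInvariant_iff_image_eq S).symm

lemma FlowInvariant.closure (hψ : IsFlow ψ) (h : FlowInvariant ψ S) :
    FlowInvariant ψ (closure S) := by
  rw [flowInvariant_iff_isInvariant hψ] at h ⊢
  exact fun t => (h t).closure (hψ.continuous_apply t)

lemma omegaLimitSet_eq_omegaLimit (ψ : X → ℝ → X) (x : X) :
    omegaLimitSet ψ x = omegaLimit atTop (fun t y => ψ y t) {x} := by
  have hbasis : (atTop : Filter ℝ).HasBasis (· ∈ Ioi 0) Ici :=
    atTop_basis.to_hasBasis (fun t _ => ⟨max t 1, mem_Ioi.2 (lt_max_of_lt_right one_pos),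
      Ici_subset_Ici.2 (le_max_left _ _)⟩) fun t _ => ⟨t, trivial, subset_rfl⟩
  simp only [omegaLimit_def, image2_singleton_right]
  exact (hbasis.biInter_mem fun _ _ h => closure_mono (image_mono h)).symm

lemma flowInvariant_omegaLimitSet (hψ : IsFlow ψ) (x : X) :
    FlowInvariant ψ (omegaLimitSet ψ x) := by
  rw [flowInvariant_iff_isInvariant hψ, omegaLimitSet_eq_omegaLimit]
  exact hψ.toFlow.isInvariant_omegaLimit atTop {x}
    fun t => tendsto_atTop_add_const_left _ t tendsto_id

lemma omegaLimitSet_apply (hψ : IsFlow ψ) (x : X) (t : ℝ) :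
    omegaLimitSet ψ (ψ x t) = omegaLimitSet ψ x := by
  have h := hψ.toFlow.omegaLimit_image_eq atTop {x}
    (fun s => tendsto_atTop_add_const_right _ s tendsto_id) t
  rw [image_singleton] at h
  rw [omegaLimitSet_eq_omegaLimit, omegaLimitSet_eq_omegaLimit]
  exact h

lemma flowInvariant_attractionRegion (hψ : IsFlow ψ) (K : Set X) :
    FlowInvariant ψ (attractionRegion ψ K) := by
  rw [flowInvariant_iff_isInvariant hψ]
  intro t x hx
  change (omegaLimitSet ψ (ψ x t)).Nonempty ∧ omegaLimitSet ψ (ψ x t) ⊆ K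
  rwa [omegaLimitSet_apply hψ]

lemma omegaLimitSet_subset_of_eventually_mem (hC : IsClosed C)
    (h : ∀ᶠ t in atTop, ψ x t ∈ C) : omegaLimitSet ψ x ⊆ C := by
  obtain ⟨T, hT⟩ := eventually_atTop.1 h
  rw [omegaLimitSet_eq_omegaLimit]
  refine (omegaLimit_subset_closure_image2 _ _ _ (Ici_mem_atTop T)).trans
    (closure_minimal ?_ hC)
  rintro _ ⟨t, ht, _, rfl, rfl⟩
  exact hT t ht

lemma omegaLimitSet_nonempty_of_eventually_mem [T2Space X] (hC : IsCompact C)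
    (h : ∀ᶠ t in atTop, ψ x t ∈ C) : (omegaLimitSet ψ x).Nonempty := by
  obtain ⟨T, hT⟩ := eventually_atTop.1 h
  rw [omegaLimitSet_eq_omegaLimit]
  refine nonempty_omegaLimit_of_isCompact_absorbing _ _ _ hC
    ⟨Ici T, Ici_mem_atTop T, closure_minimal ?_ hC.isClosed⟩ (singleton_nonempty x)
  rintro _ ⟨t, ht, _, rfl, rfl⟩
  exact hT t ht

lemma IsIsolatingNbhd.mem_attractionRegion [T2Space X] (hψ : IsFlow ψ)
    (hN : IsIsolatingNbhd ψ N K) (h : ∀ᶠ t in atTop, ψ x t ∈ N) :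
    x ∈ attractionRegion ψ K :=
  ⟨omegaLimitSet_nonempty_of_eventually_mem hN.1 h,
    hN.2.2.2 _ (flowInvariant_omegaLimitSet hψ x)
      (omegaLimitSet_subset_of_eventually_mem hN.1.isClosed h)⟩

lemma frequently_mem_of_mem_attractionRegion (hx : x ∈ attractionRegion ψ K)
    (hU : U ∈ 𝓝ˢ K) : ∃ᶠ t in atTop, ψ x t ∈ interior U := by
  obtain ⟨z, hz⟩ := hx.1
  have hUz : interior U ∈ 𝓝 z := interior_mem_nhds.2 (mem_nhdsSet_iff_forall.1 hU z (hx.2 hz))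
  rw [omegaLimitSet_eq_omegaLimit, mem_omegaLimit_singleton_iff_mapClusterPt] at hz
  exact hz.frequently hUz

lemma IsCompact.exists_forall_exists_mem_Icc (hS : IsCompact S)
    (hψ : ∀ t, Continuous fun y => ψ y t) (hU : IsOpen U)
    (h : ∀ x ∈ S, ∃ s, 0 ≤ s ∧ ψ x s ∈ U) :
    ∃ T, ∀ x ∈ S, ∃ s ∈ Icc 0 T, ψ x s ∈ U := by
  let hitsBy : ℝ → Set X := fun T => ⋃ s ∈ Icc 0 T, (fun y => ψ y s) ⁻¹' U
  have hmono : Monotone hitsBy := fun _ _ hT =>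
    biUnion_mono (Icc_subset_Icc_right hT) fun _ _ => subset_rfl
  obtain ⟨T, hT⟩ := hS.elim_directed_cover hitsBy
    (fun _ => isOpen_biUnion fun s _ => hU.preimage (hψ s))
    (fun x hx => let ⟨s, hs, hsU⟩ := h x hx; mem_iUnion.2 ⟨s, mem_biUnion ⟨hs, le_rfl⟩ hsU⟩)
    hmono.directed_le
  exact ⟨T, fun x hx => by simpa [hitsBy] using hT hx⟩

lemma FlowStable.exists_forall_ge_mem (hψ : IsFlow ψ) (hK : FlowStable ψ K) (hS : IsCompact S)
    (hSA : S ⊆ attractionRegion ψ K) (hU : U ∈ 𝓝ˢ K) :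
    ∃ T, ∀ x ∈ S, ∀ t, T ≤ t → ψ x t ∈ U := by
  obtain ⟨V, hV, hVU⟩ := hK U hU
  obtain ⟨T, hT⟩ := hS.exists_forall_exists_mem_Icc hψ.continuous_apply isOpen_interior
    fun x hx => (frequently_mem_of_mem_attractionRegion (hSA hx) hV).forall_exists_of_atTop 0
  refine ⟨T, fun x hx t ht => ?_⟩
  obtain ⟨s, ⟨-, hsT⟩, hsV⟩ := hT x hx
  simpa [hψ.2.2] using hVU _ (interior_subset hsV) (t - s) (by linarith)

lemma FlowStable.subset_of_flowInvariant [T1Space X] (hψ : IsFlow ψ) (hK : FlowStable ψ K)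
    (hS : IsCompact S) (hSinv : FlowInvariant ψ S) (hSA : S ⊆ attractionRegion ψ K) :
    S ⊆ K := by
  intro x hx
  by_contra hxK
  obtain ⟨T, hT⟩ := hK.exists_forall_ge_mem hψ hS hSA
    (isOpen_compl_singleton.mem_nhdsSet.2 (subset_compl_singleton_iff.2 hxK))
  simpa [hψ.2.2, hψ.2.1] using hT _ (hSinv.mapsTo (-T) hx) T le_rfl

lemma IsGlobalAttractor.isIsolatingNbhd [T2Space X] (hψ : IsFlow ψ)
    (hK : IsGlobalAttractor ψ K) (hN : IsCompact N) (hKN : K ⊆ interior N) :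
    IsIsolatingNbhd ψ N K := by
  refine ⟨hN, hKN, hK.2.1, fun S hSinv hSN => subset_closure.trans ?_⟩
  have hSN' : closure S ⊆ N := closure_minimal hSN hN.isClosed
  exact hK.2.2.1.subset_of_flowInvariant hψ (hN.of_isClosed_subset isClosed_closure hSN')
    (hSinv.closure hψ) (hK.2.2.2 ▸ subset_univ _)

lemma IsIsolatingNbhd.isOpen_attractionRegion [T2Space X] (hψ : IsFlow ψ)
    (hK : FlowStable ψ K) (hN : IsIsolatingNbhd ψ N K) : IsOpen (attractionRegion ψ K) := by
  obtain ⟨V, hV, hVN⟩ := hK (interior N) (isOpen_interior.mem_nhdsSet.2 hN.2.1)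
  refine isOpen_iff_mem_nhds.2 fun x hx => ?_
  obtain ⟨s, hsV⟩ := (frequently_mem_of_mem_attractionRegion hx hV).exists
  filter_upwards [(isOpen_interior.preimage (hψ.continuous_apply s)).mem_nhds hsV] with y hy
  refine hN.mem_attractionRegion hψ (eventually_atTop.2 ⟨s, fun t ht => ?_⟩)
  have hyt := hVN _ (interior_subset hy) (t - s) (by linarith)
  rw [hψ.2.2, add_sub_cancel] at hyt
  exact interior_subset hyt

lemma IsParamFlow.eventually_forall_mem {φ : ℝ → X → ℝ → X} (hφ : IsParamFlow φ)
    {P : Set (X × ℝ)} (hP : IsCompact P) (hU : IsOpen U) (h0 : ∀ p ∈ P, φ 0 p.1 p.2 ∈ U) :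
    ∀ᶠ l in 𝓝[≥] 0, ∀ p ∈ P, φ l p.1 p.2 ∈ U := by
  have hnear : ∀ᶠ l in 𝓝 (0 : ℝ), ∀ p ∈ P, l ∈ Icc (0 : ℝ) 1 → φ l p.1 p.2 ∈ U := by
    refine hP.eventually_forall_of_forall_eventually fun p hp => ?_
    have hcont := hφ.1 (0, p) ⟨left_mem_Icc.2 zero_le_one, mem_univ _⟩
    have hpre := hcont.preimage_mem_nhdsWithin (hU.mem_nhds (h0 p hp))
    rw [mem_nhdsWithin_iff_eventually] at hpre
    filter_upwards [hpre] with z hz hz₁ using hz ⟨hz₁, mem_univ _⟩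
  filter_upwards [nhdsWithin_le_nhds hnear, Icc_mem_nhdsGE zero_lt_one] with l hl hl₁ p hp
    using hl p hp hl₁

lemma IsContinuation.eventually_isIsolatingNbhd {φ : ℝ → X → ℝ → X} {J : Set ℝ}
    {K : ℝ → Set X} (hK : IsContinuation φ J K) {l₀ : ℝ} (hl₀ : l₀ ∈ J)
    (hN : IsIsolatingNbhd (φ l₀) N (K l₀)) : ∀ᶠ l in 𝓝[J] l₀, IsIsolatingNbhd (φ l) N (K l) := by
  obtain ⟨δ, hδ, h⟩ := hK.2 l₀ hl₀ N hN
  rw [eventually_nhdsWithin_iff]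
  filter_upwards [Metric.ball_mem_nhds l₀ hδ] with l hl hlJ
  exact h l hlJ (by rwa [mem_ball, Real.dist_eq] at hl)

lemma IsParamFlow.eventually_forall_eventually_mem [T2Space X] {φ : ℝ → X → ℝ → X}
    (hφ : IsParamFlow φ) (hK : FlowStable (φ 0) K) (hN : IsCompact N) (hKN : K ⊆ interior N)
    (hNA : N ⊆ attractionRegion (φ 0) K) :
    ∀ᶠ l in 𝓝[≥] 0, ∀ x ∈ N, ∀ᶠ t in atTop, φ l x t ∈ N := by
  obtain ⟨T₀, hT₀⟩ := hK.exists_forall_ge_mem (hφ.2 0 ⟨le_rfl, zero_le_one⟩) hN hNA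
    (isOpen_interior.mem_nhdsSet.2 hKN)
  obtain ⟨T, hT, hNT⟩ : ∃ T, 0 < T ∧ ∀ x ∈ N, ∀ t, T ≤ t → φ 0 x t ∈ interior N :=
    ⟨max T₀ 1, lt_max_of_lt_right one_pos,
      fun x hx t ht => hT₀ x hx t ((le_max_left _ _).trans ht)⟩
  filter_upwards [hφ.eventually_forall_mem (hN.prod isCompact_Icc) isOpen_interior
      fun p hp => hNT p.1 hp.1 p.2 hp.2.1, Icc_mem_nhdsGE zero_lt_one] with l hl hl₁ x hx
  have htrap := forall_ge_mem_of_forall_mem_Icc (hφ.2 l hl₁).2.2 interior_subset hT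
    fun y hy t ht => hl (y, t) ⟨hy, ht⟩
  exact eventually_atTop.2 ⟨T, fun t ht => interior_subset (htrap x hx t ht)⟩

end Flow

section Normed

variable {E : Type*} [NormedAddCommGroup E] {φ : ℝ → E → ℝ → E} {K : ℝ → Set E} {l : ℝ}
  {S : Set E}

lemma FlowInvariant.disjoint_escapeRegion (hS : FlowInvariant (φ l) S) (hSb : IsBounded S) :
    Disjoint S (escapeRegion φ l) := by
  obtain ⟨M, hM⟩ := hSb.subset_closedBall 0
  refine disjoint_left.2 fun x hx hesc => ?_
  obtain ⟨t, ht⟩ := (hesc.eventually_gt_atTop M).exists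
  exact ht.not_ge (mem_closedBall_zero_iff.1 (hM (hS.mapsTo t hx)))

lemma frontier_attractionRegion_subset_complementarySet (hflow : IsFlow (φ l))
    (hAo : IsOpen (attractionRegion (φ l) (K l)))
    (hAb : IsBounded (attractionRegion (φ l) (K l))) :
    frontier (attractionRegion (φ l) (K l)) ⊆ complementarySet φ K l := by
  rw [hAo.frontier_eq]
  rintro x ⟨hxcl, hxA⟩ (hx | hx)
  · exact hxA hx
  · exact (((flowInvariant_attractionRegion hflow _).closure hflow).disjoint_escapeRegion
      hAb.closure).notMem_of_mem_left hxcl hx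

variable [NormedSpace ℝ E] {A : Set E} {x : E}

lemma IsOpen.exists_nonneg_add_smul_mem_frontier (hAo : IsOpen A) (hAb : IsBounded A)
    (hx : x ∈ A) {e : E} (he : ‖e‖ = 1) : ∃ t : ℝ, 0 ≤ t ∧ x + t • e ∈ frontier A := by
  by_contra! h
  have hray : (fun t : ℝ => x + t • e) '' Ici 0 ⊆ A := by
    refine (isPreconnected_Ici.image _ (by fun_prop)).subset_of_closure_inter_subset hAo
      ⟨x, ⟨0, mem_Ici.2 le_rfl, by simp⟩, hx⟩ ?_
    rintro _ ⟨hcl, t, ht, rfl⟩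
    by_contra hA
    exact h t ht (hAo.frontier_eq ▸ ⟨hcl, hA⟩)
  obtain ⟨M, hM⟩ := hAb.subset_closedBall x
  have hM₀ : 0 ≤ M := by simpa using hM hx
  have hfar := hM (hray ⟨M + 1, mem_Ici.2 (by linarith), rfl⟩)
  rw [mem_closedBall, dist_self_add_left, norm_smul, he, mul_one,
    Real.norm_of_nonneg (by linarith)] at hfar
  linarith

lemma IsOpen.ofReal_two_mul_le_ediam_frontier [Nontrivial E] (hAo : IsOpen A)
    (hAb : IsBounded A) {r : ℝ} (hr : ball x r ⊆ A) :
    ENNReal.ofReal (2 * r) ≤ Metric.ediam (frontier A) := by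
  rcases le_or_gt r 0 with hr₀ | hr₀
  · simp [ENNReal.ofReal_of_nonpos (by linarith : 2 * r ≤ 0)]
  have hfar : ∀ y ∈ frontier A, r ≤ dist y x := fun y hy =>
    not_lt.1 fun hyr => hy.2 (interior_maximal hr isOpen_ball hyr)
  obtain ⟨e, he⟩ := exists_norm_eq E zero_le_one
  have hx : x ∈ A := hr (mem_ball_self hr₀)
  obtain ⟨t₁, ht₁, h₁⟩ := hAo.exists_nonneg_add_smul_mem_frontier hAb hx he
  obtain ⟨t₂, ht₂, h₂⟩ :=
    hAo.exists_nonneg_add_smul_mem_frontier hAb hx (e := -e) (by rwa [norm_neg])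
  have hr₁ := hfar _ h₁
  have hr₂ := hfar _ h₂
  simp only [dist_self_add_left, norm_smul, norm_neg, he, mul_one, Real.norm_of_nonneg ht₁,
    Real.norm_of_nonneg ht₂] at hr₁ hr₂
  have hdist : dist (x + t₁ • e) (x + t₂ • -e) = t₁ + t₂ := by
    rw [dist_add_left, dist_eq_norm, smul_neg, sub_neg_eq_add, ← add_smul, norm_smul, he,
      mul_one, Real.norm_of_nonneg (by linarith)]
  calc ENNReal.ofReal (2 * r) ≤ ENNReal.ofReal (dist (x + t₁ • e) (x + t₂ • -e)) :=
        ENNReal.ofReal_le_ofReal (by linarith)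
    _ = edist (x + t₁ • e) (x + t₂ • -e) := (edist_dist _ _).symm
    _ ≤ Metric.ediam (frontier A) := Metric.edist_le_ediam_of_mem h₁ h₂

end Normed

lemma exists_forall_of_eventually_nhdsGT {p : ℝ → Prop} {a : ℝ} (h : ∀ᶠ l in 𝓝[>] a, p l)
    {c : ℝ} (hc : a < c) : ∃ b, a < b ∧ b ≤ c ∧ ∀ l, a < l → l < b → p l := by
  obtain ⟨u, hu, hsub⟩ := mem_nhdsGT_iff_exists_Ioo_subset.1 h
  exact ⟨min u c, lt_min hu hc, min_le_right _ _,
    fun l hal hlb => hsub ⟨hal, hlb.trans_le (min_le_left _ _)⟩⟩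

theorem coercive_complementarySet_diam_tendsto_infty_general {n : ℕ} (hn : 2 ≤ n)
    (φ : ℝ → EuclideanSpace ℝ (Fin n) → ℝ → EuclideanSpace ℝ (Fin n))
    (hφ : IsParamFlow φ)
    (hcoer : CoerciveFamily φ)
    (lam1 : ℝ) (hlam1 : lam1 ∈ Ioc (0 : ℝ) 1)
    (K : ℝ → Set (EuclideanSpace ℝ (Fin n)))
    (hcont : IsContinuation φ (Icc 0 lam1) K)
    (hK0 : IsGlobalAttractor (φ 0) (K 0))
    (hattr : ∀ l ∈ Ioc (0 : ℝ) lam1, IsAttractor (φ l) (K l)) :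
    ∀ L > 0, ∃ lam0, 0 < lam0 ∧ lam0 ≤ lam1 ∧ ∀ l, 0 < l → l < lam0 →
      ENNReal.ofReal L < EMetric.diam (complementarySet φ K l) := by
  intro L hL
  have : Nonempty (Fin n) := ⟨⟨0, by omega⟩⟩
  obtain ⟨R, hR⟩ := hK0.1.isBounded.subset_ball 0
  set N := closedBall (0 : EuclideanSpace ℝ (Fin n)) (max R L)
  have hKN : K 0 ⊆ interior N := hR.trans
    ((ball_subset_ball (le_max_left _ _)).trans ball_subset_interior_closedBall)
  have hNiso : IsIsolatingNbhd (φ 0) N (K 0) :=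
    hK0.isIsolatingNbhd (hφ.2 0 ⟨le_rfl, zero_le_one⟩) (isCompact_closedBall _ _) hKN
  obtain ⟨lam2, hlam2, -, hbdd⟩ := hcoer lam1 hlam1 K hcont hK0
  refine exists_forall_of_eventually_nhdsGT ?_ hlam1.1
  filter_upwards [Ioo_mem_nhdsGT hlam2, Ioc_mem_nhdsGT hlam1.1,
    nhdsWithin_mono _ Ioi_subset_Ici_self (hφ.eventually_forall_eventually_mem hK0.2.2.1
      (isCompact_closedBall _ _) hKN (hK0.2.2.2 ▸ subset_univ N)),
    nhdsWithin_le_of_mem (mem_of_superset (Ioo_mem_nhdsGT hlam1.1) Ioo_subset_Icc_self)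
      (hcont.eventually_isIsolatingNbhd ⟨le_rfl, hlam1.1.le⟩ hNiso)]
    with l hl₂ hl₁ htrap hiso
  have hflow : IsFlow (φ l) := hφ.2 l ⟨hl₁.1.le, hl₁.2.trans hlam1.2⟩
  have hAo := hiso.isOpen_attractionRegion hflow (hattr l hl₁).2.2.1
  have hAb := hbdd l hl₂.1 hl₂.2
  have hNA : N ⊆ attractionRegion (φ l) (K l) :=
    fun x hx => hiso.mem_attractionRegion hflow (htrap x hx)
  calc ENNReal.ofReal L < ENNReal.ofReal (2 * max R L) :=
        (ENNReal.ofReal_lt_ofReal_iff (by positivity)).2 (by linarith [le_max_right R L])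
    _ ≤ Metric.ediam (frontier (attractionRegion (φ l) (K l))) :=
        hAo.ofReal_two_mul_le_ediam_frontier hAb (ball_subset_closedBall.trans hNA)
    _ ≤ Metric.ediam (complementarySet φ K l) :=
        Metric.ediam_mono (frontier_attractionRegion_subset_complementarySet hflow hAo hAb)

/-- In the setting of a coercive family of dissipative flows on `ℝⁿ`
(`n ≥ 2`), the diameter of `C_λ = ℝⁿ ∖ (A_λ(K_λ) ∪ R_λ)` tends to infinity as
`λ → 0⁺`: for every `L > 0` there is `λ₀ > 0` with `diam C_λ > L` for all
`0 < λ < λ₀`. -/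
theorem coercive_complementarySet_diam_tendsto_infty {n : ℕ} (hn : 2 ≤ n)
    (φ : ℝ → EuclideanSpace ℝ (Fin n) → ℝ → EuclideanSpace ℝ (Fin n))
    (hφ : IsParamFlow φ)
    (hdiss : ∀ l ∈ Icc (0 : ℝ) 1, Dissipative (φ l))
    (hcoer : CoerciveFamily φ)
    (lam1 : ℝ) (hlam1 : lam1 ∈ Ioc (0 : ℝ) 1)
    (K : ℝ → Set (EuclideanSpace ℝ (Fin n)))
    (hcont : IsContinuation φ (Icc 0 lam1) K)
    (hK0 : IsGlobalAttractor (φ 0) (K 0))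
    (hattr : ∀ l ∈ Ioc (0 : ℝ) lam1, IsAttractor (φ l) (K l)) :
    ∀ L > 0, ∃ lam0, 0 < lam0 ∧ lam0 ≤ lam1 ∧ ∀ l, 0 < l → l < lam0 →
      ENNReal.ofReal L < EMetric.diam (complementarySet φ K l) :=
  coercive_complementarySet_diam_tendsto_infty_general hn φ hφ hcoer lam1 hlam1 K hcont hK0 hattr
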